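/- Let Θ ⊆ ℝ^K be open, let x : Θ → ℂ^N be differentiable on Θ, let σ > 0, and for Φ ∈ ℂ^{L×N} define F(Φ,θ)_{m,n} = (2/σ²)·Re⟨Φ ∂x(θ)/∂θ_m, Φ ∂x(θ)/∂θ_n⟩. Let p be a probability density on Θ that is positive and continuously differentiable, and define the Bayesian information matrix B(Φ)_{m,n} = ∫_Θ F(Φ,θ)_{m,n} p(θ) dθ + J_{m,n}, where J_{m,n} = ∫_Θ (∂ln p(θ)/∂θ_m)(∂ln p(θ)/∂θ_n) p(θ) dθ, assuming all these integrals are finite. If A ∈ ℂ^{M×N} satisfies the tangent plane ε-isometry property at every θ ∈ Θ (with 0 < ε < 1), then for every a ∈ ℝ^K, aᵀ B(√(M/N)(1−ε) I_N) a ≤ aᵀ B(A) a ≤ aᵀ B(√(M/N)(1+ε) I_N) a. -/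

import Mathlib

open scoped BigOperators
open MeasureTheory

/-- Action of an `M × N` complex matrix on `ℂ^N` with Euclidean norms. -/
noncomputable def mulVecE {M N : ℕ} (A : Matrix (Fin M) (Fin N) ℂ)
    (v : EuclideanSpace ℂ (Fin N)) : EuclideanSpace ℂ (Fin M) :=
  WithLp.toLp 2 (fun i => ∑ j, A i j * v j)

/-- Fisher information matrix entry for estimating `θ ∈ ℝ^K` from `Φ x(θ)` in complex AWGN. -/
noncomputable def FIM {K L N : ℕ} (σ : ℝ) (x : (Fin K → ℝ) → EuclideanSpace ℂ (Fin N))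
    (θ : Fin K → ℝ) (Φ : Matrix (Fin L) (Fin N) ℂ) (m n : Fin K) : ℝ :=
  (2 / σ ^ 2) *
    (inner ℂ (mulVecE Φ (fderiv ℝ x θ (Pi.single m 1)))
      (mulVecE Φ (fderiv ℝ x θ (Pi.single n 1))) : ℂ).re

/-- Prior information matrix entry `J_{m,n} = ∫_Θ (∂ ln p/∂θ_m)(∂ ln p/∂θ_n) p dθ`. -/
noncomputable def priorInfo {K : ℕ} (p : (Fin K → ℝ) → ℝ) (Θ : Set (Fin K → ℝ))
    (m n : Fin K) : ℝ :=
  ∫ θ in Θ, (fderiv ℝ (fun t => Real.log (p t)) θ (Pi.single m 1)) *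
    (fderiv ℝ (fun t => Real.log (p t)) θ (Pi.single n 1)) * p θ

/-- Bayesian information matrix entry `B(Φ)_{m,n} = ∫_Θ F(Φ,θ)_{m,n} p(θ) dθ + J_{m,n}`. -/
noncomputable def BIM {K L N : ℕ} (σ : ℝ) (x : (Fin K → ℝ) → EuclideanSpace ℂ (Fin N))
    (p : (Fin K → ℝ) → ℝ) (Θ : Set (Fin K → ℝ)) (Φ : Matrix (Fin L) (Fin N) ℂ)
    (m n : Fin K) : ℝ :=
  (∫ θ in Θ, FIM σ x θ Φ m n * p θ) + priorInfo p Θ m n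

/-!
With `v = ∑ k, a k • ∂x(θ)/∂θ_k` the tangent direction picked out by `a`, the quadratic form
`aᵀ F(Φ, θ) a` is `(2 / σ²) ‖Φ v‖²`. The tangent plane isometry property therefore squeezes
`aᵀ F(A, θ) a` between the forms of the two scaled identities at every `θ ∈ Θ`; weighting by
`p ≥ 0` and integrating preserves both inequalities, and the prior term `aᵀ J a` is common to
all three Bayesian forms.
-/

lemma mulVecE_eq_toLpLin {M N : ℕ} (A : Matrix (Fin M) (Fin N) ℂ) (v : EuclideanSpace ℂ (Fin N)) :
    mulVecE A v = Matrix.toLpLin 2 2 A v :=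
  rfl

lemma mulVecE_real_smul_one {N : ℕ} (c : ℝ) (v : EuclideanSpace ℂ (Fin N)) :
    mulVecE ((c : ℂ) • (1 : Matrix (Fin N) (Fin N) ℂ)) v = (c : ℂ) • v := by
  rw [mulVecE_eq_toLpLin, map_smul, Matrix.toLpLin_one, LinearMap.smul_apply, LinearMap.id_apply]

lemma norm_mulVecE_real_smul_one {N : ℕ} (c : ℝ) (v : EuclideanSpace ℂ (Fin N)) :
    ‖mulVecE ((c : ℂ) • (1 : Matrix (Fin N) (Fin N) ℂ)) v‖ = |c| * ‖v‖ := by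
  rw [mulVecE_real_smul_one, norm_smul, Complex.norm_real, Real.norm_eq_abs]

lemma mulVecE_sum_real_smul {M N ι : ℕ} (A : Matrix (Fin M) (Fin N) ℂ) (a : Fin ι → ℝ)
    (v : Fin ι → EuclideanSpace ℂ (Fin N)) :
    mulVecE A (∑ k, a k • v k) = ∑ k, (a k : ℂ) • mulVecE A (v k) := by
  simp only [mulVecE_eq_toLpLin, map_sum, ← Complex.coe_smul, map_smul]

lemma FIM_real_smul {K L N : ℕ} (σ : ℝ) (x : (Fin K → ℝ) → EuclideanSpace ℂ (Fin N))
    (θ : Fin K → ℝ) (c : ℝ) (Φ : Matrix (Fin L) (Fin N) ℂ) (m n : Fin K) :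
    FIM σ x θ ((c : ℂ) • Φ) m n = c ^ 2 * FIM σ x θ Φ m n := by
  simp only [FIM, mulVecE_eq_toLpLin, map_smul, LinearMap.smul_apply, inner_smul_left,
    inner_smul_right, Complex.conj_ofReal, ← mul_assoc, ← Complex.ofReal_mul,
    Complex.re_ofReal_mul]
  ring

lemma sum_sum_mul_re_inner_mul {𝕜 E ι : Type*} [RCLike 𝕜] [NormedAddCommGroup E]
    [InnerProductSpace 𝕜 E] [Fintype ι] (a : ι → ℝ) (w : ι → E) :
    ∑ m, ∑ n, a m * RCLike.re (inner 𝕜 (w m) (w n)) * a n = ‖∑ k, (a k : 𝕜) • w k‖ ^ 2 := by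
  rw [← inner_self_eq_norm_sq (𝕜 := 𝕜), sum_inner, map_sum]
  refine Finset.sum_congr rfl fun m _ => ?_
  rw [inner_sum, map_sum]
  refine Finset.sum_congr rfl fun n _ => ?_
  rw [inner_smul_left, inner_smul_right, RCLike.conj_ofReal, ← mul_assoc, ← RCLike.ofReal_mul,
    RCLike.re_ofReal_mul]
  ring

lemma sum_sum_mul_FIM_mul {K L N : ℕ} (σ : ℝ) (x : (Fin K → ℝ) → EuclideanSpace ℂ (Fin N))
    (θ : Fin K → ℝ) (Φ : Matrix (Fin L) (Fin N) ℂ) (a : Fin K → ℝ) :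
    ∑ m, ∑ n, a m * FIM σ x θ Φ m n * a n =
      2 / σ ^ 2 * ‖mulVecE Φ (∑ k, a k • fderiv ℝ x θ (Pi.single k 1))‖ ^ 2 := by
  rw [mulVecE_sum_real_smul, ← RCLike.ofReal_eq_complex_ofReal, ← sum_sum_mul_re_inner_mul,
    Finset.mul_sum]
  refine Finset.sum_congr rfl fun m _ => ?_
  rw [Finset.mul_sum]
  refine Finset.sum_congr rfl fun n _ => ?_
  rw [FIM, RCLike.re_to_complex]
  ring

section Integrals

variable {α ι : Type*} [MeasurableSpace α] {μ : Measure α} [Fintype ι]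

lemma integrable_sum_sum_mul_mul {f : ι → ι → α → ℝ} (hf : ∀ m n, Integrable (f m n) μ)
    (a : ι → ℝ) : Integrable (fun t => ∑ m, ∑ n, a m * f m n t * a n) μ :=
  integrable_finsetSum _ fun m _ => integrable_finsetSum _ fun n _ =>
    ((hf m n).const_mul _).mul_const _

lemma integral_sum_sum_mul_mul {f : ι → ι → α → ℝ} (hf : ∀ m n, Integrable (f m n) μ)
    (a : ι → ℝ) :
    ∫ t, ∑ m, ∑ n, a m * f m n t * a n ∂μ = ∑ m, ∑ n, a m * (∫ t, f m n t ∂μ) * a n := by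
  rw [integral_finsetSum _ fun m _ => integrable_finsetSum _ fun n _ =>
    ((hf m n).const_mul _).mul_const _]
  refine Finset.sum_congr rfl fun m _ => ?_
  rw [integral_finsetSum _ fun n _ => ((hf m n).const_mul _).mul_const _]
  simp only [integral_mul_const, integral_const_mul]

end Integrals

lemma sum_sum_mul_BIM_mul {K L N : ℕ} (σ : ℝ) (x : (Fin K → ℝ) → EuclideanSpace ℂ (Fin N))
    (p : (Fin K → ℝ) → ℝ) (Θ : Set (Fin K → ℝ)) (Φ : Matrix (Fin L) (Fin N) ℂ)
    (hΦ : ∀ m n, IntegrableOn (fun θ => FIM σ x θ Φ m n * p θ) Θ) (a : Fin K → ℝ) :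
    ∑ m, ∑ n, a m * BIM σ x p Θ Φ m n * a n =
      (∫ θ in Θ, ∑ m, ∑ n, a m * (FIM σ x θ Φ m n * p θ) * a n) +
        ∑ m, ∑ n, a m * priorInfo p Θ m n * a n := by
  simp only [BIM, mul_add, add_mul, Finset.sum_add_distrib, integral_sum_sum_mul_mul hΦ]

lemma sum_sum_mul_BIM_mul_le {K L L' N : ℕ} (σ : ℝ)
    (x : (Fin K → ℝ) → EuclideanSpace ℂ (Fin N)) (p : (Fin K → ℝ) → ℝ) {Θ : Set (Fin K → ℝ)}
    (hΘ : MeasurableSet Θ) (hp : ∀ θ ∈ Θ, 0 ≤ p θ)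
    {Φ : Matrix (Fin L) (Fin N) ℂ} {Ψ : Matrix (Fin L') (Fin N) ℂ}
    (hΦ : ∀ m n, IntegrableOn (fun θ => FIM σ x θ Φ m n * p θ) Θ)
    (hΨ : ∀ m n, IntegrableOn (fun θ => FIM σ x θ Ψ m n * p θ) Θ) (a : Fin K → ℝ)
    (hle : ∀ θ ∈ Θ, ‖mulVecE Φ (∑ k, a k • fderiv ℝ x θ (Pi.single k 1))‖ ≤
      ‖mulVecE Ψ (∑ k, a k • fderiv ℝ x θ (Pi.single k 1))‖) :
    ∑ m, ∑ n, a m * BIM σ x p Θ Φ m n * a n ≤ ∑ m, ∑ n, a m * BIM σ x p Θ Ψ m n * a n := by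
  rw [sum_sum_mul_BIM_mul σ x p Θ Φ hΦ, sum_sum_mul_BIM_mul σ x p Θ Ψ hΨ]
  refine add_le_add_left (setIntegral_mono_on (integrable_sum_sum_mul_mul hΦ a)
    (integrable_sum_sum_mul_mul hΨ a) hΘ fun θ hθ => ?_) _
  have factor_p : ∀ {L} (Φ : Matrix (Fin L) (Fin N) ℂ),
      ∑ m, ∑ n, a m * (FIM σ x θ Φ m n * p θ) * a n =
        (∑ m, ∑ n, a m * FIM σ x θ Φ m n * a n) * p θ := by
    intro L Φ
    simp only [Finset.sum_mul]
    exact Finset.sum_congr rfl fun m _ => Finset.sum_congr rfl fun n _ => by ring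
  rw [factor_p, factor_p, sum_sum_mul_FIM_mul, sum_sum_mul_FIM_mul]
  gcongr
  exacts [hp θ hθ, hle θ hθ]

section TangentPlaneIsometry

variable {M N : ℕ} {A : Matrix (Fin M) (Fin N) ℂ} {v : EuclideanSpace ℂ (Fin N)} {c : ℝ}

lemma mul_norm_le_norm_mulVecE (h : v ≠ 0 → c ≤ ‖mulVecE A v‖ / ‖v‖) :
    c * ‖v‖ ≤ ‖mulVecE A v‖ := by
  rcases eq_or_ne v 0 with rfl | hv
  · simp
  · exact (le_div_iff₀ (norm_pos_iff.mpr hv)).mp (h hv)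

lemma norm_mulVecE_le_mul (h : v ≠ 0 → ‖mulVecE A v‖ / ‖v‖ ≤ c) :
    ‖mulVecE A v‖ ≤ c * ‖v‖ := by
  rcases eq_or_ne v 0 with rfl | hv
  · simp [mulVecE_eq_toLpLin]
  · exact (div_le_iff₀ (norm_pos_iff.mpr hv)).mp (h hv)

end TangentPlaneIsometry

theorem stmt1_general {K M N : ℕ} (Θ : Set (Fin K → ℝ)) (hΘ : IsOpen Θ)
    (x : (Fin K → ℝ) → EuclideanSpace ℂ (Fin N))
    (σ : ℝ)
    (p : (Fin K → ℝ) → ℝ) (hp_pos : ∀ θ ∈ Θ, 0 < p θ)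
    (ε : ℝ) (hε1 : ε < 1)
    (A : Matrix (Fin M) (Fin N) ℂ)
    (hiso : ∀ θ ∈ Θ, ∀ a : Fin K → ℝ,
      (∑ k, a k • fderiv ℝ x θ (Pi.single k 1)) ≠ 0 →
        Real.sqrt ((M : ℝ) / N) * (1 - ε) ≤
            ‖mulVecE A (∑ k, a k • fderiv ℝ x θ (Pi.single k 1))‖ /
              ‖∑ k, a k • fderiv ℝ x θ (Pi.single k 1)‖ ∧
          ‖mulVecE A (∑ k, a k • fderiv ℝ x θ (Pi.single k 1))‖ /
              ‖∑ k, a k • fderiv ℝ x θ (Pi.single k 1)‖ ≤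
            Real.sqrt ((M : ℝ) / N) * (1 + ε))
    -- all the integrals defining the Bayesian information matrices are finite:
    (hintA : ∀ m n : Fin K, IntegrableOn (fun θ => FIM σ x θ A m n * p θ) Θ)
    (hintI : ∀ m n : Fin K,
      IntegrableOn (fun θ => FIM σ x θ (1 : Matrix (Fin N) (Fin N) ℂ) m n * p θ) Θ) :
    ∀ a : Fin K → ℝ,
      (∑ m, ∑ n, a m * BIM σ x p Θ
          (((Real.sqrt ((M : ℝ) / N) * (1 - ε) : ℝ) : ℂ) • (1 : Matrix (Fin N) (Fin N) ℂ)) m n * a n)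
        ≤ ∑ m, ∑ n, a m * BIM σ x p Θ A m n * a n ∧
      (∑ m, ∑ n, a m * BIM σ x p Θ A m n * a n)
        ≤ ∑ m, ∑ n, a m * BIM σ x p Θ
          (((Real.sqrt ((M : ℝ) / N) * (1 + ε) : ℝ) : ℂ) • (1 : Matrix (Fin N) (Fin N) ℂ)) m n * a n := by
  intro a
  have hc₁ : 0 ≤ Real.sqrt ((M : ℝ) / N) * (1 - ε) :=
    mul_nonneg (Real.sqrt_nonneg _) (by linarith)
  have hp : ∀ θ ∈ Θ, 0 ≤ p θ := fun θ hθ => (hp_pos θ hθ).le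
  have hint_smul : ∀ (c : ℝ) (m n : Fin K),
      IntegrableOn (fun θ => FIM σ x θ ((c : ℂ) • (1 : Matrix (Fin N) (Fin N) ℂ)) m n * p θ) Θ := by
    intro c m n
    simp only [FIM_real_smul, mul_assoc]
    exact (hintI m n).const_mul (c ^ 2)
  constructor
  · refine sum_sum_mul_BIM_mul_le σ x p hΘ.measurableSet hp (hint_smul _) hintA a fun θ hθ => ?_
    rw [norm_mulVecE_real_smul_one, abs_of_nonneg hc₁]
    exact mul_norm_le_norm_mulVecE fun hv => (hiso θ hθ a hv).1
  · refine sum_sum_mul_BIM_mul_le σ x p hΘ.measurableSet hp hintA (hint_smul _) a fun θ hθ => ?_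
    rw [norm_mulVecE_real_smul_one]
    exact (norm_mulVecE_le_mul fun hv => (hiso θ hθ a hv).2).trans
      (mul_le_mul_of_nonneg_right (le_abs_self _) (norm_nonneg _))

/-- If `A` satisfies the tangent plane `ε`-isometry property at every `θ ∈ Θ`, the Bayesian
information quadratic forms with compressive measurements are sandwiched between those with
all `N` measurements at an SNR penalty of `M/N`. -/
theorem stmt1 {K M N : ℕ} (Θ : Set (Fin K → ℝ)) (hΘ : IsOpen Θ)
    (x : (Fin K → ℝ) → EuclideanSpace ℂ (Fin N))
    (hx : ∀ θ ∈ Θ, DifferentiableAt ℝ x θ) (σ : ℝ) (hσ : 0 < σ)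
    (p : (Fin K → ℝ) → ℝ) (hp_pos : ∀ θ ∈ Θ, 0 < p θ)
    (hp_smooth : ContDiffOn ℝ 1 p Θ) (hp_one : ∫ θ in Θ, p θ = 1)
    (ε : ℝ) (hε0 : 0 < ε) (hε1 : ε < 1)
    (A : Matrix (Fin M) (Fin N) ℂ)
    (hiso : ∀ θ ∈ Θ, ∀ a : Fin K → ℝ,
      (∑ k, a k • fderiv ℝ x θ (Pi.single k 1)) ≠ 0 →
        Real.sqrt ((M : ℝ) / N) * (1 - ε) ≤
            ‖mulVecE A (∑ k, a k • fderiv ℝ x θ (Pi.single k 1))‖ /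
              ‖∑ k, a k • fderiv ℝ x θ (Pi.single k 1)‖ ∧
          ‖mulVecE A (∑ k, a k • fderiv ℝ x θ (Pi.single k 1))‖ /
              ‖∑ k, a k • fderiv ℝ x θ (Pi.single k 1)‖ ≤
            Real.sqrt ((M : ℝ) / N) * (1 + ε))
    -- all the integrals defining the Bayesian information matrices are finite:
    (hintA : ∀ m n : Fin K, IntegrableOn (fun θ => FIM σ x θ A m n * p θ) Θ)
    (hintI : ∀ m n : Fin K,
      IntegrableOn (fun θ => FIM σ x θ (1 : Matrix (Fin N) (Fin N) ℂ) m n * p θ) Θ)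
    (hintJ : ∀ m n : Fin K,
      IntegrableOn (fun θ => (fderiv ℝ (fun t => Real.log (p t)) θ (Pi.single m 1)) *
        (fderiv ℝ (fun t => Real.log (p t)) θ (Pi.single n 1)) * p θ) Θ) :
    ∀ a : Fin K → ℝ,
      (∑ m, ∑ n, a m * BIM σ x p Θ
          (((Real.sqrt ((M : ℝ) / N) * (1 - ε) : ℝ) : ℂ) • (1 : Matrix (Fin N) (Fin N) ℂ)) m n * a n)
        ≤ ∑ m, ∑ n, a m * BIM σ x p Θ A m n * a n ∧
      (∑ m, ∑ n, a m * BIM σ x p Θ A m n * a n)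
        ≤ ∑ m, ∑ n, a m * BIM σ x p Θ
          (((Real.sqrt ((M : ℝ) / N) * (1 + ε) : ℝ) : ℂ) • (1 : Matrix (Fin N) (Fin N) ℂ)) m n * a n :=
  stmt1_general Θ hΘ x σ p hp_pos ε hε1 A hiso hintA hintI
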